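/- arXiv:1308.2493 — 4 statements merged into one kernel-verified Lean document; each statement's English description precedes it below -/
import Mathlib

section
/- For every a, b ∈ {1,2,3} with a ≠ b and every positive integer k, conjugation by the translation matrix translates Pauli roots: σ_a^{1/k} = ρ_{ab} · σ_b^{1/k} · ρ_{ab}. -/
open Matrix Complex
open scoped Kronecker

noncomputable section

/-- The Pauli matrices σ₁ = X, σ₂ = Y, σ₃ = Z. -/
def σ : ℕ → Matrix (Fin 2) (Fin 2) ℂ
  | 1 => !![0, 1; 1, 0]
  | 2 => !![0, -Complex.I; Complex.I, 0]
  | 3 => !![1, 0; 0, -1]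
  | _ => 1

/-- Rotation by angle θ around axis a: R_a(θ) = cos(θ/2)·1 − i·sin(θ/2)·σ_a. -/
def R (a : ℕ) (θ : ℝ) : Matrix (Fin 2) (Fin 2) ℂ :=
  (Real.cos (θ / 2) : ℂ) • (1 : Matrix (Fin 2) (Fin 2) ℂ)
    - (Complex.I * (Real.sin (θ / 2) : ℂ)) • σ a

/-- The k-th Pauli root σ_a^{1/k} = e^{iπ/(2k)}·R_a(π/k). -/
def pauliRoot (a k : ℕ) : Matrix (Fin 2) (Fin 2) ℂ :=
  Complex.exp (Complex.I * (Real.pi : ℂ) / (2 * (k : ℂ))) • R a (Real.pi / (k : ℝ))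

lemma sqrt2_ne : ((Real.sqrt 2 : ℝ) : ℂ) ≠ 0 := by
  exact_mod_cast Real.sqrt_ne_zero'.2 (by norm_num)

lemma sqrt2_sq : ((Real.sqrt 2 : ℝ) : ℂ) ^ 2 = 2 := by
  have : Real.sqrt 2 ^ 2 = 2 := Real.sq_sqrt (by norm_num)
  exact_mod_cast this

set_option maxHeartbeats 1000000 in
lemma key : ∀ a ∈ ({1, 2, 3} : Set ℕ), ∀ b ∈ ({1, 2, 3} : Set ℕ), a ≠ b → ∀ c d : ℂ,
    c • (1 : Matrix (Fin 2) (Fin 2) ℂ) - d • σ a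
      = ((Real.sqrt 2 : ℂ))⁻¹ • (σ a + σ b) * (c • 1 - d • σ b)
          * (((Real.sqrt 2 : ℂ))⁻¹ • (σ a + σ b)) := by
  have hne := sqrt2_ne
  have hsq := sqrt2_sq
  have h3 : (Complex.I) ^ 3 = -Complex.I := by simp [pow_succ, Complex.I_sq]
  have h4 : ((Real.sqrt 2 : ℝ) : ℂ) ^ 4 = 4 := by
    rw [show (4:ℕ) = 2*2 from rfl, pow_mul, hsq]; norm_num
  have h23 : ((Real.sqrt 2 : ℝ) : ℂ) ^ 3 = 2 * ((Real.sqrt 2 : ℝ) : ℂ) := by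
    rw [show (3:ℕ) = 2+1 from rfl, pow_succ, hsq]
  have h5 : ((Real.sqrt 2 : ℝ) : ℂ) ^ 5 = 4 * ((Real.sqrt 2 : ℝ) : ℂ) := by
    rw [show (5:ℕ) = 4+1 from rfl, pow_succ, h4]
  intro a ha b hb hab c d
  simp only [Set.mem_insert_iff, Set.mem_singleton_iff] at ha hb
  rcases ha with rfl | rfl | rfl <;> rcases hb with rfl | rfl | rfl <;>
    first
    | exact absurd rfl hab
    | (ext i j
       fin_cases i <;> fin_cases j <;>
        · simp [σ, Matrix.mul_apply, Matrix.vecMul, dotProduct, Fin.sum_univ_two, Matrix.one_apply, Matrix.sub_apply, Matrix.smul_apply]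
          try field_simp
          try ring_nf
          try simp [Complex.I_sq, hsq]
          try ring_nf
          try simp [Complex.I_sq, hsq, h3, h4, h5, h23]
          try ring)


/-- σ_a^{1/k} = ρ_{ab}·σ_b^{1/k}·ρ_{ab} for a ≠ b. -/
theorem pauliRoot_translation :
    ∀ a ∈ ({1, 2, 3} : Set ℕ), ∀ b ∈ ({1, 2, 3} : Set ℕ), a ≠ b → ∀ k : ℕ, 0 < k →
      pauliRoot a k
        = ((Real.sqrt 2 : ℂ))⁻¹ • (σ a + σ b) * pauliRoot b k
            * (((Real.sqrt 2 : ℂ))⁻¹ • (σ a + σ b)) := by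
  intro a ha b hb hab k _
  unfold pauliRoot R
  rw [key a ha b hb hab]
  simp only [Matrix.mul_smul, Matrix.smul_mul, smul_smul]
  ring_nf
end
end

section
/- For every a ∈ {1,2,3} and every positive integer k, the controlled k-th Pauli root can be flipped using translation gates: C₁(σ_a^{1/k}) = (ρ_{a3} ⊗ ρ_{a3}) · C₂(σ_a^{1/k}) · (ρ_{a3} ⊗ ρ_{a3}), where ρ_{ab} := (σ_a + σ_b)/√2 for a ≠ b and ρ_{33} is taken to be the 2×2 identity matrix. -/
open Matrix Complex
open scoped Kronecker

noncomputable section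

def E00 : Matrix (Fin 2) (Fin 2) ℂ := !![1, 0; 0, 0]
def E11 : Matrix (Fin 2) (Fin 2) ℂ := !![0, 0; 0, 1]

/-- Controlled gate, control on the first qubit. -/
def C₁ (U : Matrix (Fin 2) (Fin 2) ℂ) : Matrix (Fin 2 × Fin 2) (Fin 2 × Fin 2) ℂ :=
  E00 ⊗ₖ (1 : Matrix (Fin 2) (Fin 2) ℂ) + E11 ⊗ₖ U

/-- Controlled gate, control on the second qubit. -/
def C₂ (U : Matrix (Fin 2) (Fin 2) ℂ) : Matrix (Fin 2 × Fin 2) (Fin 2 × Fin 2) ℂ :=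
  (1 : Matrix (Fin 2) (Fin 2) ℂ) ⊗ₖ E00 + U ⊗ₖ E11

/-- Translation matrix ρ_{a3}, with ρ_{33} = 1. -/
def ρ₃ (a : ℕ) : Matrix (Fin 2) (Fin 2) ℂ :=
  if a = 3 then 1 else ((Real.sqrt 2 : ℂ))⁻¹ • (σ a + σ 3)

lemma sqrt2_facts : ((Real.sqrt 2 : ℝ) : ℂ) * ((Real.sqrt 2 : ℝ) : ℂ) = 2 := by
  norm_cast; rw [Real.mul_self_sqrt (by norm_num)]

lemma inv_sqrt2_sq : (((Real.sqrt 2 : ℝ) : ℂ))⁻¹ * (((Real.sqrt 2 : ℝ) : ℂ))⁻¹ = 2⁻¹ := by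
  rw [← mul_inv, sqrt2_facts]

-- 2x2 facts
lemma hPP (a : ℕ) (ha : a = 1 ∨ a = 2 ∨ a = 3) : ρ₃ a * ρ₃ a = 1 := by
  rcases ha with rfl | rfl | rfl <;>
  · simp only [ρ₃, σ, if_true, if_false, reduceIte, Matrix.smul_mul, Matrix.mul_smul,
      smul_smul, inv_sqrt2_sq]
    ext i j
    fin_cases i <;> fin_cases j <;>
      simp [Matrix.mul_apply, Fin.sum_univ_two, Matrix.one_apply] <;> ring_nf <;>
      norm_num [pow_two, inv_sqrt2_sq, Complex.I_sq]

lemma hPσ (a : ℕ) (ha : a = 1 ∨ a = 2 ∨ a = 3) : ρ₃ a * σ a * ρ₃ a = σ 3 := by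
  rcases ha with rfl | rfl | rfl <;>
  · simp only [ρ₃, σ, if_true, if_false, reduceIte, Matrix.smul_mul, Matrix.mul_smul,
      smul_smul, inv_sqrt2_sq]
    ext i j
    fin_cases i <;> fin_cases j <;>
      simp [Matrix.mul_apply, Fin.sum_univ_two, Matrix.one_apply, Complex.ext_iff] <;> ring_nf <;>
      norm_num [pow_two, inv_sqrt2_sq, Complex.I_sq, Complex.ext_iff]

lemma hPE00 (a : ℕ) (ha : a = 1 ∨ a = 2 ∨ a = 3) :
    ρ₃ a * E00 * ρ₃ a = (2 : ℂ)⁻¹ • (1 + σ a) := by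
  rcases ha with rfl | rfl | rfl <;>
  · simp only [ρ₃, σ, E00, if_true, if_false, reduceIte, Matrix.smul_mul, Matrix.mul_smul,
      smul_smul, inv_sqrt2_sq]
    ext i j
    fin_cases i <;> fin_cases j <;>
      simp [Matrix.mul_apply, Fin.sum_univ_two, Matrix.one_apply, Complex.ext_iff] <;> ring_nf <;>
      norm_num [pow_two, inv_sqrt2_sq, Complex.I_sq, Complex.ext_iff]

lemma hPE11 (a : ℕ) (ha : a = 1 ∨ a = 2 ∨ a = 3) :
    ρ₃ a * E11 * ρ₃ a = (2 : ℂ)⁻¹ • (1 - σ a) := by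
  rcases ha with rfl | rfl | rfl <;>
  · simp only [ρ₃, σ, E11, if_true, if_false, reduceIte, Matrix.smul_mul, Matrix.mul_smul,
      smul_smul, inv_sqrt2_sq]
    ext i j
    fin_cases i <;> fin_cases j <;>
      simp [Matrix.mul_apply, Fin.sum_univ_two, Matrix.one_apply, Complex.ext_iff] <;> ring_nf <;>
      norm_num [pow_two, inv_sqrt2_sq, Complex.I_sq, Complex.ext_iff]

lemma hE00 : E00 = (2 : ℂ)⁻¹ • (1 + σ 3) := by
  ext i j; fin_cases i <;> fin_cases j <;> simp [E00, σ, Matrix.one_apply] <;> norm_num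

lemma hE11 : E11 = (2 : ℂ)⁻¹ • (1 - σ 3) := by
  ext i j; fin_cases i <;> fin_cases j <;> simp [E11, σ, Matrix.one_apply] <;> norm_num

lemma neg_kron (A B : Matrix (Fin 2) (Fin 2) ℂ) : (-A) ⊗ₖ B = -(A ⊗ₖ B) := by
  ext ⟨i, j⟩ ⟨k, l⟩; simp [Matrix.kroneckerMap_apply]

lemma kron_neg (A B : Matrix (Fin 2) (Fin 2) ℂ) : A ⊗ₖ (-B) = -(A ⊗ₖ B) := by
  ext ⟨i, j⟩ ⟨k, l⟩; simp [Matrix.kroneckerMap_apply]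

lemma key_s8 (a : ℕ) (ha : a = 1 ∨ a = 2 ∨ a = 3) (α : ℂ) :
    C₁ (α • 1 + (1 - α) • σ a)
      = (ρ₃ a ⊗ₖ ρ₃ a) * C₂ (α • 1 + (1 - α) • σ a) * (ρ₃ a ⊗ₖ ρ₃ a) := by
  set P := ρ₃ a
  set U : Matrix (Fin 2) (Fin 2) ℂ := α • 1 + (1 - α) • σ a with hU
  have hPU : P * U * P = α • 1 + (1 - α) • σ 3 := by
    rw [hU]
    rw [Matrix.mul_add, Matrix.add_mul, Matrix.mul_smul, Matrix.mul_smul,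
      Matrix.smul_mul, Matrix.smul_mul, Matrix.mul_one, hPP a ha]
    rw [show P * (σ a) * P = σ 3 from hPσ a ha]
  rw [C₂, Matrix.mul_add, Matrix.add_mul, ← Matrix.mul_kronecker_mul, ← Matrix.mul_kronecker_mul,
    ← Matrix.mul_kronecker_mul, ← Matrix.mul_kronecker_mul, Matrix.mul_one,
    hPP a ha, hPE00 a ha, hPE11 a ha]
  have h1 : P * U * P = α • 1 + (1 - α) • σ 3 := hPU
  rw [show P * U * P = α • (1 : Matrix (Fin 2) (Fin 2) ℂ) + (1 - α) • σ 3 from h1]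
  rw [C₁, hE00, hE11, hU]
  -- expand kronecker bilinearity
  simp only [Matrix.add_kronecker, Matrix.kronecker_add, Matrix.smul_kronecker,
    Matrix.kronecker_smul, sub_eq_add_neg, neg_smul, smul_add, smul_smul, ← neg_smul]
  simp only [neg_kron, kron_neg, smul_neg, ← neg_smul]
  module

lemma pauliRoot_decomp (a k : ℕ) (hk : 0 < k) :
    ∃ α : ℂ, pauliRoot a k = α • 1 + (1 - α) • σ a := by
  have hk0 : (k : ℂ) ≠ 0 := Nat.cast_ne_zero.2 hk.ne'
  set c : ℝ := Real.pi / k / 2 with hc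
  have hae : Complex.I * (Real.pi : ℂ) / (2 * (k : ℂ)) = (c : ℂ) * Complex.I := by
    rw [hc]; push_cast; field_simp
  set e : ℂ := Complex.exp (Complex.I * (Real.pi : ℂ) / (2 * (k : ℂ))) with he
  refine ⟨e * Real.cos c, ?_⟩
  have h1 : (1 : ℂ) - e * Real.cos c = -(e * (Complex.I * Real.sin c)) := by
    have : e * ((Real.cos c : ℂ) - Complex.I * Real.sin c) = 1 := by
      have hexp : ((Real.cos c : ℂ) - Complex.I * Real.sin c) = Complex.exp (-(c : ℂ) * Complex.I) := by
        rw [Complex.exp_mul_I, Complex.cos_neg, Complex.sin_neg]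
        push_cast
        ring
      rw [hexp, he, hae, ← Complex.exp_add]
      ring_nf
      exact Complex.exp_zero
    linear_combination -this
  rw [pauliRoot, R, smul_sub, smul_smul, smul_smul, h1, sub_eq_add_neg, ← neg_smul]

/-- C₁(σ_a^{1/k}) = (ρ_{a3} ⊗ ρ_{a3}) · C₂(σ_a^{1/k}) · (ρ_{a3} ⊗ ρ_{a3}). -/
theorem controlled_root_flip :
    ∀ a ∈ ({1, 2, 3} : Set ℕ), ∀ k : ℕ, 0 < k →
      C₁ (pauliRoot a k)
        = (ρ₃ a ⊗ₖ ρ₃ a) * C₂ (pauliRoot a k) * (ρ₃ a ⊗ₖ ρ₃ a) := by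
  intro a ha k hk
  obtain ⟨α, hα⟩ := pauliRoot_decomp a k hk
  rw [hα]
  exact key_s8 a (by simpa using ha) α
end
end

section
/- (Lemma 1) For every a, b ∈ {1,2,3} with a ≠ b and every positive integer k, the case gate that applies (σ_a^{1/k})† when the control is 0 and σ_a^{1/k} when the control is 1 factors as: E₀₀ ⊗ (σ_a^{1/k})† + E₁₁ ⊗ σ_a^{1/k} = C₁(σ_b) · (Z^{1/k} ⊗ (σ_a^{1/k})†) · C₁(σ_b). -/
open Matrix Complex
open scoped Kronecker

noncomputable section

lemma exp_eq (k : ℕ) :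
    Complex.exp (Complex.I * (Real.pi : ℂ) / (2 * (k : ℂ)))
      = (Real.cos (Real.pi / (k:ℝ) / 2) : ℂ) + Complex.I * (Real.sin (Real.pi / (k:ℝ) / 2) : ℂ) := by
  have h : Complex.I * (Real.pi : ℂ) / (2 * (k : ℂ)) = ((Real.pi / (k:ℝ) / 2 : ℝ) : ℂ) * Complex.I := by
    push_cast; ring
  rw [h, Complex.exp_mul_I, Complex.ofReal_cos, Complex.ofReal_sin]
  ring

lemma exp_conj_eq (k : ℕ) :
    (starRingEnd ℂ) (Complex.exp (Complex.I * (Real.pi : ℂ) / (2 * (k : ℂ))))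
      = (Real.cos (Real.pi / (k:ℝ) / 2) : ℂ) - Complex.I * (Real.sin (Real.pi / (k:ℝ) / 2) : ℂ) := by
  rw [exp_eq, map_add, _root_.map_mul, Complex.conj_ofReal, Complex.conj_ofReal, Complex.conj_I]
  ring

lemma exp_mul_conj (k : ℕ) :
    Complex.exp (Complex.I * (Real.pi : ℂ) / (2 * (k : ℂ)))
      * (starRingEnd ℂ) (Complex.exp (Complex.I * (Real.pi : ℂ) / (2 * (k : ℂ)))) = 1 := by
  rw [exp_conj_eq, exp_eq]
  have h : ((Real.sin (Real.pi / (k:ℝ) / 2) : ℂ))^2 + ((Real.cos (Real.pi / (k:ℝ) / 2) : ℂ))^2 = 1 := by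
    exact_mod_cast congrArg (Complex.ofReal) (Real.sin_sq_add_cos_sq (Real.pi / (k:ℝ) / 2))
  linear_combination h - ((Real.sin (Real.pi / (k:ℝ) / 2) : ℂ))^2 * Complex.I_sq

lemma hZ (k : ℕ) :
    pauliRoot 3 k = E00 + (Complex.exp (Complex.I * (Real.pi : ℂ) / (2 * (k : ℂ)))
      * Complex.exp (Complex.I * (Real.pi : ℂ) / (2 * (k : ℂ)))) • E11 := by
  have h1 := exp_mul_conj k
  rw [exp_conj_eq] at h1
  have h2 := exp_eq k
  rw [pauliRoot, R]
  set e := Complex.exp (Complex.I * (Real.pi : ℂ) / (2 * (k : ℂ))) with he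
  set c := ((Real.cos (Real.pi / (k:ℝ) / 2) : ℝ) : ℂ) with hc
  set s := ((Real.sin (Real.pi / (k:ℝ) / 2) : ℝ) : ℂ) with hs
  clear_value e c s
  ext i j
  fin_cases i <;> fin_cases j
  · simp [σ, E00, E11, Matrix.one_apply]
    linear_combination h1
  · simp [σ, E00, E11, Matrix.one_apply]
  · simp [σ, E00, E11, Matrix.one_apply]
  · simp [σ, E00, E11, Matrix.one_apply]
    exact Or.inl h2.symm

lemma sigma_herm (a : ℕ) (ha : a ∈ ({1, 2, 3} : Set ℕ)) : (σ a)ᴴ = σ a := by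
  rcases ha with h | h | h <;> subst h <;>
    ext i j <;> fin_cases i <;> fin_cases j <;>
    simp [σ, Matrix.conjTranspose_apply]

lemma hAH (a k : ℕ) (hσa : (σ a)ᴴ = σ a) :
    (pauliRoot a k)ᴴ = (starRingEnd ℂ) (Complex.exp (Complex.I * (Real.pi : ℂ) / (2 * (k : ℂ)))) •
      ((Real.cos (Real.pi / (k:ℝ) / 2) : ℂ) • (1 : Matrix (Fin 2) (Fin 2) ℂ)
        + (Complex.I * (Real.sin (Real.pi / (k:ℝ) / 2) : ℂ)) • σ a) := by
  rw [pauliRoot, R, Matrix.conjTranspose_smul, Matrix.conjTranspose_sub,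
    Matrix.conjTranspose_smul, Matrix.conjTranspose_smul, Matrix.conjTranspose_one, hσa]
  simp only [Complex.star_def, _root_.map_mul, Complex.conj_I, Complex.conj_ofReal]
  rw [neg_mul, neg_smul, sub_neg_eq_add]

lemma hback (a b k : ℕ) (hσa : (σ a)ᴴ = σ a) (hb2 : σ b * σ b = 1)
    (hcom : σ b * σ a * σ b = -σ a) :
    (Complex.exp (Complex.I * (Real.pi : ℂ) / (2 * (k : ℂ)))
      * Complex.exp (Complex.I * (Real.pi : ℂ) / (2 * (k : ℂ)))) •
      (σ b * (pauliRoot a k)ᴴ * σ b) = pauliRoot a k := by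
  rw [hAH a k hσa]
  rw [Matrix.mul_smul, Matrix.smul_mul, smul_smul]
  rw [mul_assoc, mul_comm _ ((starRingEnd ℂ) _), ← mul_assoc, exp_mul_conj, one_mul]
  have hBB : σ b * ((Real.cos (Real.pi / (k:ℝ) / 2) : ℂ) • (1 : Matrix (Fin 2) (Fin 2) ℂ)
        + (Complex.I * (Real.sin (Real.pi / (k:ℝ) / 2) : ℂ)) • σ a) * σ b
      = R a (Real.pi / (k:ℝ)) := by
    rw [Matrix.mul_add, Matrix.add_mul, Matrix.mul_smul, Matrix.mul_smul,
      Matrix.smul_mul, Matrix.smul_mul, Matrix.mul_one, hb2, Matrix.mul_assoc, ← Matrix.mul_assoc, hcom, R]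
    rw [smul_neg, sub_eq_add_neg]
  rw [hBB, pauliRoot]

lemma e00e00 : E00 * E00 = E00 := by
  ext i j; fin_cases i <;> fin_cases j <;> simp [E00, Matrix.mul_apply, Fin.sum_univ_two]
lemma e00e11 : E00 * E11 = 0 := by
  ext i j; fin_cases i <;> fin_cases j <;> simp [E00, E11, Matrix.mul_apply, Fin.sum_univ_two]
lemma e11e00 : E11 * E00 = 0 := by
  ext i j; fin_cases i <;> fin_cases j <;> simp [E00, E11, Matrix.mul_apply, Fin.sum_univ_two]
lemma e11e11 : E11 * E11 = E11 := by
  ext i j; fin_cases i <;> fin_cases j <;> simp [E11, Matrix.mul_apply, Fin.sum_univ_two]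

lemma master (a b k : ℕ) (hσa : (σ a)ᴴ = σ a) (hb2 : σ b * σ b = 1)
    (hcom : σ b * σ a * σ b = -σ a) :
    E00 ⊗ₖ (pauliRoot a k)ᴴ + E11 ⊗ₖ pauliRoot a k
      = C₁ (σ b) * (pauliRoot 3 k ⊗ₖ (pauliRoot a k)ᴴ) * C₁ (σ b) := by
  rw [C₁, hZ k, Matrix.add_kronecker, Matrix.smul_kronecker]
  simp only [Matrix.add_mul, Matrix.mul_add, Matrix.mul_smul, Matrix.smul_mul,
    ← Matrix.mul_kronecker_mul]
  rw [e00e00, e00e11, e11e00, e11e11]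
  simp only [Matrix.zero_kronecker, Matrix.kronecker_zero, Matrix.zero_mul, Matrix.mul_zero,
    smul_zero, add_zero, zero_add, Matrix.one_mul, Matrix.mul_one]
  simp only [← Matrix.mul_kronecker_mul, e00e00, e00e11, e11e00, e11e11,
    Matrix.zero_kronecker, smul_zero, add_zero, zero_add, Matrix.one_mul, Matrix.mul_one]
  rw [← Matrix.kronecker_smul, hback a b k hσa hb2 hcom]


/-- Lemma 1: the case gate applying (σ_a^{1/k})† on control 0 and σ_a^{1/k} on
control 1 factors as C₁(σ_b)·(Z^{1/k} ⊗ (σ_a^{1/k})†)·C₁(σ_b). -/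
theorem case_circuit :
    ∀ a ∈ ({1, 2, 3} : Set ℕ), ∀ b ∈ ({1, 2, 3} : Set ℕ), a ≠ b → ∀ k : ℕ, 0 < k →
      E00 ⊗ₖ (pauliRoot a k)ᴴ + E11 ⊗ₖ pauliRoot a k
        = C₁ (σ b) * (pauliRoot 3 k ⊗ₖ (pauliRoot a k)ᴴ) * C₁ (σ b) := by
  intro a ha b hb hab k _
  have hσa : (σ a)ᴴ = σ a := sigma_herm a ha
  have hb2 : σ b * σ b = 1 := by
    rcases hb with h | h | h <;> subst h <;> ext i j <;> fin_cases i <;> fin_cases j <;>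
      simp [σ, Matrix.mul_apply, Fin.sum_univ_two, Matrix.one_apply]
  have hcom : σ b * σ a * σ b = -σ a := by
    rcases ha with h | h | h <;> rcases hb with h' | h' | h' <;> subst h <;> subst h' <;>
      first
        | exact absurd rfl hab
        | (ext i j; fin_cases i <;> fin_cases j <;>
            simp [σ, Matrix.mul_apply, Fin.sum_univ_two])
  exact master a b k hσa hb2 hcom
end
end

section
/- (Barenco NCV decomposition of the Toffoli gate) With V := X^{1/2} = e^{iπ/4}·R₁(π/2), the Toffoli gate equals the following product of five two-qubit gates acting on three qubits: E₀₀⊗1⊗1 + E₁₁⊗C₁(X) = (E₀₀⊗1⊗1 + E₁₁⊗1⊗V) · (C₁(X)⊗1) · (1⊗C₁(V†)) · (C₁(X)⊗1) · (1⊗C₁(V)). -/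
open Matrix Complex
open scoped Kronecker

noncomputable section

/-- Reinterpret a (2-qubit ⊗ 1-qubit) matrix as a 3-qubit matrix via the
canonical associator (Fin 2 × Fin 2) × Fin 2 ≃ Fin 2 × (Fin 2 × Fin 2). -/
def assocM (A : Matrix ((Fin 2 × Fin 2) × Fin 2) ((Fin 2 × Fin 2) × Fin 2) ℂ) :
    Matrix (Fin 2 × Fin 2 × Fin 2) (Fin 2 × Fin 2 × Fin 2) ℂ :=
  Matrix.reindex (Equiv.prodAssoc (Fin 2) (Fin 2) (Fin 2))
    (Equiv.prodAssoc (Fin 2) (Fin 2) (Fin 2)) A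

def X : Matrix (Fin 2) (Fin 2) ℂ := !![0, 1; 1, 0]

/-- The square root of NOT: V = e^{iπ/4}·R₁(π/2). -/
def V : Matrix (Fin 2) (Fin 2) ℂ :=
  Complex.exp (Complex.I * (Real.pi : ℂ) / 4) • R 1 (Real.pi / 2)


lemma hexp : Complex.exp (Complex.I * (Real.pi : ℂ) / 4)
    = (Real.sqrt 2 / 2 : ℝ) + (Real.sqrt 2 / 2 : ℝ) * Complex.I := by
  have h : Complex.I * (Real.pi : ℂ) / 4 = ((Real.pi / 4 : ℝ) : ℂ) * Complex.I := by
    push_cast; ring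
  rw [h, Complex.exp_mul_I, ← Complex.ofReal_cos, ← Complex.ofReal_sin,
    Real.cos_pi_div_four, Real.sin_pi_div_four]

lemma hV : V = !![(1+Complex.I)/2, (1-Complex.I)/2; (1-Complex.I)/2, (1+Complex.I)/2] := by
  rw [V, R, hexp]
  have hc : Real.cos (Real.pi / 2 / 2) = Real.sqrt 2 / 2 := by
    rw [show Real.pi/2/2 = Real.pi/4 by ring, Real.cos_pi_div_four]
  have hs : Real.sin (Real.pi / 2 / 2) = Real.sqrt 2 / 2 := by
    rw [show Real.pi/2/2 = Real.pi/4 by ring, Real.sin_pi_div_four]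
  rw [hc, hs]
  ext i j
  fin_cases i <;> fin_cases j <;>
    simp [σ, Matrix.one_apply, Complex.ext_iff] <;> push_cast <;> ring_nf <;>
    rw [Real.sq_sqrt (by norm_num : (2:ℝ) ≥ 0)] <;> norm_num

lemma hVconj : Vᴴ = !![(1-Complex.I)/2, (1+Complex.I)/2; (1+Complex.I)/2, (1-Complex.I)/2] := by
  rw [hV]; ext i j; fin_cases i <;> fin_cases j <;>
    simp [Matrix.conjTranspose_apply, Complex.ext_iff]

lemma hVV : V * V = X := by
  rw [hV, X]; ext i j; fin_cases i <;> fin_cases j <;>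
    simp [Matrix.mul_apply, Fin.sum_univ_succ, Complex.ext_iff] <;> ring_nf <;>
    simp [Complex.I_sq]

lemma hVVh : V * Vᴴ = 1 := by
  rw [hVconj, hV]; ext i j; fin_cases i <;> fin_cases j <;>
    simp [Matrix.mul_apply, Fin.sum_univ_succ, Matrix.one_apply, Complex.ext_iff] <;>
    ring_nf <;> simp [Complex.I_sq]

lemma hVhV : Vᴴ * V = 1 := by
  rw [hVconj, hV]; ext i j; fin_cases i <;> fin_cases j <;>
    simp [Matrix.mul_apply, Fin.sum_univ_succ, Matrix.one_apply, Complex.ext_iff] <;>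
    ring_nf <;> simp [Complex.I_sq]

lemma xe00x : X * E00 * X = E11 := by
  ext i j; fin_cases i <;> fin_cases j <;> simp [Matrix.mul_apply, Fin.sum_univ_succ, E00, E11, X]
lemma xe11x : X * E11 * X = E00 := by
  ext i j; fin_cases i <;> fin_cases j <;> simp [Matrix.mul_apply, Fin.sum_univ_succ, E00, E11, X]
lemma e_sum : E00 + E11 = 1 := by
  ext i j; fin_cases i <;> fin_cases j <;> simp [E00, E11, Matrix.one_apply]

lemma block_mul {n : Type*} [Fintype n] [DecidableEq n] (A B C D : Matrix n n ℂ) :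
    (E00 ⊗ₖ A + E11 ⊗ₖ B) * (E00 ⊗ₖ C + E11 ⊗ₖ D)
      = E00 ⊗ₖ (A * C) + E11 ⊗ₖ (B * D) := by
  rw [add_mul, mul_add, mul_add, ← Matrix.mul_kronecker_mul, ← Matrix.mul_kronecker_mul,
    ← Matrix.mul_kronecker_mul, ← Matrix.mul_kronecker_mul,
    e00e00, e11e11, e00e11, e11e00]
  simp [Matrix.zero_kronecker]

lemma hassoc : assocM (C₁ X ⊗ₖ (1 : Matrix (Fin 2) (Fin 2) ℂ))
    = E00 ⊗ₖ ((1:Matrix (Fin 2) (Fin 2) ℂ) ⊗ₖ (1:Matrix (Fin 2) (Fin 2) ℂ))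
      + E11 ⊗ₖ (X ⊗ₖ (1:Matrix (Fin 2) (Fin 2) ℂ)) := by
  rw [assocM, C₁, Matrix.add_kronecker, Matrix.reindex_apply, Matrix.submatrix_add,
    Pi.add_apply, Pi.add_apply, Matrix.kronecker_assoc', Matrix.kronecker_assoc']

lemma hone (U : Matrix (Fin 2 × Fin 2) (Fin 2 × Fin 2) ℂ) :
    ((1:Matrix (Fin 2) (Fin 2) ℂ) ⊗ₖ U) = E00 ⊗ₖ U + E11 ⊗ₖ U := by
  rw [← e_sum, Matrix.add_kronecker]

/-- Barenco NCV decomposition of the Toffoli gate. -/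
theorem barenco_toffoli :
    E00 ⊗ₖ ((1 : Matrix (Fin 2) (Fin 2) ℂ) ⊗ₖ (1 : Matrix (Fin 2) (Fin 2) ℂ))
        + E11 ⊗ₖ C₁ X
      = (E00 ⊗ₖ ((1 : Matrix (Fin 2) (Fin 2) ℂ) ⊗ₖ (1 : Matrix (Fin 2) (Fin 2) ℂ))
            + E11 ⊗ₖ ((1 : Matrix (Fin 2) (Fin 2) ℂ) ⊗ₖ V))
        * assocM (C₁ X ⊗ₖ (1 : Matrix (Fin 2) (Fin 2) ℂ))
        * ((1 : Matrix (Fin 2) (Fin 2) ℂ) ⊗ₖ C₁ (Vᴴ))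
        * assocM (C₁ X ⊗ₖ (1 : Matrix (Fin 2) (Fin 2) ℂ))
        * ((1 : Matrix (Fin 2) (Fin 2) ℂ) ⊗ₖ C₁ V) := by
  have hone2 : ((1:Matrix (Fin 2) (Fin 2) ℂ) ⊗ₖ (1:Matrix (Fin 2) (Fin 2) ℂ))
      = (1 : Matrix (Fin 2 × Fin 2) (Fin 2 × Fin 2) ℂ) := Matrix.one_kronecker_one
  rw [hassoc, hone (C₁ Vᴴ), hone (C₁ V), block_mul, block_mul, block_mul, block_mul, hone2]
  congr 1
  · -- E00 block
    rw [Matrix.one_mul, Matrix.one_mul, Matrix.mul_one, C₁, C₁, block_mul, hVhV,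
      Matrix.one_mul, ← Matrix.add_kronecker, e_sum, Matrix.one_kronecker_one]
  · -- E11 block
    have h1 : (1:Matrix (Fin 2) (Fin 2) ℂ) ⊗ₖ V * (X ⊗ₖ (1:Matrix (Fin 2) (Fin 2) ℂ))
        = X ⊗ₖ V := by
      rw [← Matrix.mul_kronecker_mul, Matrix.one_mul, Matrix.mul_one]
    have h2 : X ⊗ₖ V * C₁ Vᴴ = (X*E00) ⊗ₖ V + (X*E11) ⊗ₖ (1:Matrix (Fin 2) (Fin 2) ℂ) := by
      rw [C₁, Matrix.mul_add, ← Matrix.mul_kronecker_mul, ← Matrix.mul_kronecker_mul,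
        Matrix.mul_one, hVVh]
    have h3 : ((X*E00) ⊗ₖ V + (X*E11) ⊗ₖ (1:Matrix (Fin 2) (Fin 2) ℂ))
        * (X ⊗ₖ (1:Matrix (Fin 2) (Fin 2) ℂ))
        = E00 ⊗ₖ (1:Matrix (Fin 2) (Fin 2) ℂ) + E11 ⊗ₖ V := by
      rw [add_mul, ← Matrix.mul_kronecker_mul, ← Matrix.mul_kronecker_mul,
        Matrix.mul_one, Matrix.mul_one, Matrix.mul_assoc X E00 X, Matrix.mul_assoc X E11 X,
        ← Matrix.mul_assoc X E00 X, ← Matrix.mul_assoc X E11 X, xe00x, xe11x, add_comm]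
    have key : (1:Matrix (Fin 2) (Fin 2) ℂ) ⊗ₖ V * (X ⊗ₖ (1:Matrix (Fin 2) (Fin 2) ℂ)) * C₁ Vᴴ
          * (X ⊗ₖ (1:Matrix (Fin 2) (Fin 2) ℂ)) * C₁ V = C₁ X :=
      calc (1:Matrix (Fin 2) (Fin 2) ℂ) ⊗ₖ V * (X ⊗ₖ (1:Matrix (Fin 2) (Fin 2) ℂ)) * C₁ Vᴴ
          * (X ⊗ₖ (1:Matrix (Fin 2) (Fin 2) ℂ)) * C₁ V
        = (E00 ⊗ₖ (1:Matrix (Fin 2) (Fin 2) ℂ) + E11 ⊗ₖ V)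
            * (E00 ⊗ₖ (1:Matrix (Fin 2) (Fin 2) ℂ) + E11 ⊗ₖ V) := by
            rw [h1, h2, h3, C₁]
        _ = C₁ X := by rw [block_mul, Matrix.one_mul, hVV, C₁]
    rw [key]
end
end
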